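/- arXiv:2604.01464 — 6 statements merged into one kernel-verified Lean document; each statement's English description precedes it below -/
import Mathlib

section
/- Let p be a prime and let (a_n)_{n≥0} be a sequence in ℚ_p such that ‖a_n‖_p ≥ p for all n ≥ 1, and let (p_n) be the convergent numerators of the continued fraction with partial quotients (a_n). If a_0 ≠ 0 and ‖a_0‖_p ≥ 1, then ‖p_n‖_p = ‖a_0 a_1 ⋯ a_n‖_p for all n ≥ 0. If a_0 = 0, then ‖p_1‖_p = 1 and ‖p_n‖_p = ‖a_2 a_3 ⋯ a_n‖_p for all n ≥ 2. -/
/-!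
In an ultrametric field, if `‖y‖ ≤ ‖x‖`, `x ≠ 0` and `‖c‖ > 1`, then `c * x` strictly dominates `y`,
so `‖c * x + y‖ = ‖c‖ * ‖x‖`. For a sequence with `Q (n + 2) = b n * Q (n + 1) + Q n` and all
`‖b n‖ > 1` this propagates `‖Q n‖ ≤ ‖Q (n + 1)‖`, hence `‖Q (n + 1)‖ = ‖Q 1‖ * ∏ i < n, ‖b i‖`.
The numerators are such a sequence from `p_{-1}, p_0` when `‖a_0‖ ≥ 1`, and from `p_1 = 1, p_2 = a_2`
when `a_0 = 0`.
-/

open Finset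

section Ultrametric

variable {K : Type*} [NormedDivisionRing K] [IsUltrametricDist K]

theorem norm_mul_add_eq_of_norm_le {c x y : K} (hc : 1 < ‖c‖) (hx : x ≠ 0) (hyx : ‖y‖ ≤ ‖x‖) :
    ‖c * x + y‖ = ‖c‖ * ‖x‖ := by
  have hlt : ‖y‖ < ‖c * x‖ := by
    rw [norm_mul]
    exact hyx.trans_lt (lt_mul_of_one_lt_left (norm_pos_iff.2 hx) hc)
  rw [IsUltrametricDist.norm_add_eq_max_of_norm_ne_norm hlt.ne', max_eq_left hlt.le, norm_mul]

variable {b Q : ℕ → K} (hb : ∀ n, 1 < ‖b n‖) (hQ : ∀ n, Q (n + 2) = b n * Q (n + 1) + Q n)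
  (h01 : ‖Q 0‖ ≤ ‖Q 1‖) (h1 : Q 1 ≠ 0)
include hb hQ h01 h1

theorem norm_le_norm_succ_and_ne_zero_of_recurrence (n : ℕ) :
    ‖Q n‖ ≤ ‖Q (n + 1)‖ ∧ Q (n + 1) ≠ 0 := by
  induction n with
  | zero => exact ⟨h01, h1⟩
  | succ n ih =>
    have hnorm := norm_mul_add_eq_of_norm_le (hb n) ih.2 ih.1
    rw [← hQ] at hnorm
    refine ⟨?_, ?_⟩
    · rw [hnorm]
      exact le_mul_of_one_le_left (norm_nonneg _) (hb n).le
    · rw [← norm_pos_iff, hnorm]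
      exact mul_pos (one_pos.trans (hb n)) (norm_pos_iff.2 ih.2)

theorem norm_eq_mul_prod_of_recurrence (n : ℕ) :
    ‖Q (n + 1)‖ = ‖Q 1‖ * ∏ i ∈ range n, ‖b i‖ := by
  induction n with
  | zero => simp
  | succ n ih =>
    obtain ⟨hle, hne⟩ := norm_le_norm_succ_and_ne_zero_of_recurrence hb hQ h01 h1 n
    rw [hQ, norm_mul_add_eq_of_norm_le (hb n) hne hle, ih, prod_range_succ]
    ring

end Ultrametric

/-- `P (n+1)` plays the role of `p_n` (with `P 0 = p_{-1} = 1`). -/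
theorem padic_cf_numerator_norm (p : ℕ) [Fact p.Prime]
    (a : ℕ → ℚ_[p]) (hnorm : ∀ n, 1 ≤ n → (p : ℝ) ≤ ‖a n‖)
    (P : ℕ → ℚ_[p])
    (hP0 : P 0 = 1) (hP1 : P 1 = a 0)
    (hPrec : ∀ n, P (n + 2) = a (n + 1) * P (n + 1) + P n) :
    (a 0 ≠ 0 → 1 ≤ ‖a 0‖ →
      ∀ n, ‖P (n + 1)‖ = ‖∏ i ∈ Finset.range (n + 1), a i‖) ∧
    (a 0 = 0 → ‖P 2‖ = 1 ∧
      ∀ n, 2 ≤ n → ‖P (n + 1)‖ = ‖∏ i ∈ Finset.Icc 2 n, a i‖) := by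
  have hp : (1 : ℝ) < p := by exact_mod_cast (Fact.out : p.Prime).one_lt
  have ha : ∀ n, 1 ≤ n → 1 < ‖a n‖ := fun n hn => hp.trans_le (hnorm n hn)
  refine ⟨fun ha0 ha0_norm n => ?_, fun ha0 => ?_⟩
  · rw [norm_eq_mul_prod_of_recurrence (b := fun n => a (n + 1)) (fun n => ha _ n.succ_pos) hPrec
      (by rwa [hP0, hP1, norm_one]) (hP1 ▸ ha0) n, hP1, norm_prod, prod_range_succ' _ n, mul_comm]
  · have hP2 : P 2 = 1 := by rw [hPrec 0, hP1, ha0, hP0, mul_zero, zero_add]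
    have hP3 : P 3 = a 2 := by rw [hPrec 1, hP2, hP1, ha0, mul_one, add_zero]
    refine ⟨by rw [hP2, norm_one], fun n hn => ?_⟩
    obtain ⟨m, rfl⟩ := Nat.exists_eq_add_of_le' hn
    have ha2 : 1 < ‖a 2‖ := ha 2 one_le_two
    rw [norm_eq_mul_prod_of_recurrence (b := fun n => a (n + 3)) (Q := fun n => P (n + 2))
      (fun n => ha _ (by omega)) (fun n => hPrec (n + 2))
      (by rw [hP2, hP3, norm_one]; exact ha2.le) (hP3 ▸ norm_pos_iff.1 (one_pos.trans ha2)) m,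
      hP3, ← Ico_add_one_right_eq_Icc, prod_Ico_eq_prod_range, norm_prod,
      show m + 2 + 1 - 2 = m + 1 by omega, prod_range_succ' _ m, mul_comm]
    simp only [add_comm 2]
end

section
/- Let p be a prime and let (a_n)_{n≥0} be a sequence in ℚ_p such that ‖a_n‖_p ≥ p for all n ≥ 1, and let (q_n) be the convergent denominators of the continued fraction with partial quotients (a_n). Then ‖q_n‖_p = ‖a_1 a_2 ⋯ a_n‖_p for all n ≥ 1 (and ‖q_0‖_p = 1). -/
/-!
By the ultrametric inequality, `‖c x + y‖ = ‖c‖ ‖x‖` as soon as `‖y‖ < ‖x‖ < ‖c‖ ‖x‖`. Since every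
partial quotient has norm `> 1`, induction on the recursion `q_n = a_n q_{n-1} + q_{n-2}` shows that
the norms `‖q_n‖` are strictly increasing and that each step multiplies the norm by `‖a_n‖`.
-/

open Finset

section Ultrametric

variable {K : Type*} [NormedField K] [IsUltrametricDist K]

lemma norm_mul_add_eq_of_norm_lt {c x y : K} (hc : 1 < ‖c‖) (hyx : ‖y‖ < ‖x‖) :
    ‖c * x + y‖ = ‖c‖ * ‖x‖ ∧ ‖x‖ < ‖c * x + y‖ := by
  have hx : ‖x‖ < ‖c * x‖ := by
    rw [norm_mul]
    exact lt_mul_left (hyx.trans_le' (norm_nonneg y)) hc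
  have hcxy : ‖c * x + y‖ = ‖c * x‖ := by
    rw [IsUltrametricDist.norm_add_eq_max_of_norm_ne_norm (hyx.trans hx).ne',
      max_eq_left (hyx.trans hx).le]
  exact ⟨hcxy.trans (norm_mul c x), hcxy ▸ hx⟩

/-- `Q (n + 1)` is the `n`-th convergent denominator `q_n`, and `Q 0 = q_{-1} = 0`. -/
theorem norm_contFrac_denom_eq_prod_and_lt (a : ℕ → K) (ha : ∀ n, 1 ≤ n → 1 < ‖a n‖)
    (Q : ℕ → K) (hQ0 : Q 0 = 0) (hQ1 : Q 1 = 1)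
    (hQrec : ∀ n, Q (n + 2) = a (n + 1) * Q (n + 1) + Q n) (n : ℕ) :
    ‖Q (n + 1)‖ = ∏ i ∈ Icc 1 n, ‖a i‖ ∧ ‖Q n‖ < ‖Q (n + 1)‖ := by
  induction n with
  | zero => simp [hQ0, hQ1]
  | succ m ih =>
    obtain ⟨hprod, hlt⟩ := ih
    obtain ⟨hstep, hlt'⟩ := norm_mul_add_eq_of_norm_lt (ha (m + 1) (by omega)) hlt
    rw [hQrec m]
    refine ⟨?_, hlt'⟩
    rw [hstep, hprod, prod_Icc_succ_top (by omega), mul_comm]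

end Ultrametric

/-- Lemma 1 (ii): norms of convergent denominators of a p-adic continued fraction.
`Q (n+1)` plays the role of `q_n` (with `Q 0 = q_{-1} = 0`). -/
theorem padic_cf_denominator_norm (p : ℕ) [Fact p.Prime]
    (a : ℕ → ℚ_[p]) (hnorm : ∀ n, 1 ≤ n → (p : ℝ) ≤ ‖a n‖)
    (Q : ℕ → ℚ_[p])
    (hQ0 : Q 0 = 0) (hQ1 : Q 1 = 1)
    (hQrec : ∀ n, Q (n + 2) = a (n + 1) * Q (n + 1) + Q n) :
    ‖Q 1‖ = 1 ∧ ∀ n, 1 ≤ n → ‖Q (n + 1)‖ = ‖∏ i ∈ Finset.Icc 1 n, a i‖ := by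
  have hp : (1 : ℝ) < p := by exact_mod_cast (Fact.out : p.Prime).one_lt
  have ha : ∀ n, 1 ≤ n → 1 < ‖a n‖ := fun n hn => hp.trans_le (hnorm n hn)
  refine ⟨by rw [hQ1, norm_one], fun n _ => ?_⟩
  rw [norm_prod]
  exact (norm_contFrac_denom_eq_prod_and_lt a ha Q hQ0 hQ1 hQrec n).1
end

section
/- Let p be a prime and let (a_n)_{n≥0} be a sequence in ℚ_p with ‖a_n‖_p ≥ p for all n ≥ 1. Let ξ ∈ ℚ_p and let (ξ_k)_{k≥0} be a sequence in ℚ_p with ξ_0 = ξ, ξ_{k+1} ≠ 0 and ξ_k = a_k + 1/ξ_{k+1} for all k ≥ 0, and ‖ξ_k‖_p = ‖a_k‖_p for all k ≥ 1. Then for every n ≥ 0, ‖ξ − p_n/q_n‖_p = 1/(‖q_n‖_p · ‖q_{n+1}‖_p), where (p_n), (q_n) are the convergent numerators and denominators of the continued fraction with partial quotients (a_n). -/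
/-!
The convergent numerators and denominators satisfy `p_{n-1} q_n - p_n q_{n-1} = (-1)^n`, and the
complete quotients give `ξ = (ξ_{n+1} p_n + p_{n-1}) / (ξ_{n+1} q_n + q_{n-1})`, so
`ξ - p_n/q_n = ± 1 / ((ξ_{n+1} q_n + q_{n-1}) q_n)`. Since all partial quotients after the first
have norm `> 1`, the ultrametric inequality makes `‖q_n‖` strictly increasing, and then
`ξ_{n+1} q_n + q_{n-1} = q_{n+1} + q_n / ξ_{n+2}` has the same norm as `q_{n+1}`.
-/

open IsUltrametricDist

section Continuants

variable {K : Type*} {a P Q : ℕ → K}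

theorem continuant_det [CommRing K] (hP0 : P 0 = 1) (hQ0 : Q 0 = 0) (hQ1 : Q 1 = 1)
    (hPrec : ∀ n, P (n + 2) = a (n + 1) * P (n + 1) + P n)
    (hQrec : ∀ n, Q (n + 2) = a (n + 1) * Q (n + 1) + Q n) (n : ℕ) :
    P n * Q (n + 1) - P (n + 1) * Q n = (-1) ^ n := by
  induction n with
  | zero => simp [hP0, hQ0, hQ1]
  | succ m ih =>
    rw [hPrec m, hQrec m]
    linear_combination -ih

variable [Field K] {ξs : ℕ → K}

theorem mul_complete_quotient_succ (hne : ∀ k, ξs (k + 1) ≠ 0)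
    (hrec : ∀ k, ξs k = a k + 1 / ξs (k + 1)) (k : ℕ) :
    ξs k * ξs (k + 1) = a k * ξs (k + 1) + 1 := by
  rw [hrec k]
  field_simp [hne k]

theorem complete_quotient_zero_mul_eq (hP0 : P 0 = 1) (hP1 : P 1 = a 0) (hQ0 : Q 0 = 0)
    (hQ1 : Q 1 = 1) (hPrec : ∀ n, P (n + 2) = a (n + 1) * P (n + 1) + P n)
    (hQrec : ∀ n, Q (n + 2) = a (n + 1) * Q (n + 1) + Q n)
    (hne : ∀ k, ξs (k + 1) ≠ 0) (hrec : ∀ k, ξs k = a k + 1 / ξs (k + 1)) (n : ℕ) :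
    ξs 0 * (ξs (n + 1) * Q (n + 1) + Q n) = ξs (n + 1) * P (n + 1) + P n := by
  have hmul := mul_complete_quotient_succ hne hrec
  induction n with
  | zero =>
    rw [hQ1, hQ0, hP1, hP0]
    linear_combination hmul 0
  | succ m ih =>
    rw [hQrec m, hPrec m]
    linear_combination ξs (m + 2) * ih - (ξs 0 * Q (m + 1) - P (m + 1)) * hmul (m + 1)

theorem complete_quotient_zero_sub_convergent (hP0 : P 0 = 1) (hP1 : P 1 = a 0)
    (hQ0 : Q 0 = 0) (hQ1 : Q 1 = 1) (hPrec : ∀ n, P (n + 2) = a (n + 1) * P (n + 1) + P n)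
    (hQrec : ∀ n, Q (n + 2) = a (n + 1) * Q (n + 1) + Q n)
    (hne : ∀ k, ξs (k + 1) ≠ 0) (hrec : ∀ k, ξs k = a k + 1 / ξs (k + 1)) {n : ℕ}
    (hQ : Q (n + 1) ≠ 0) (hD : ξs (n + 1) * Q (n + 1) + Q n ≠ 0) :
    ξs 0 - P (n + 1) / Q (n + 1) =
      (-1) ^ n / ((ξs (n + 1) * Q (n + 1) + Q n) * Q (n + 1)) := by
  rw [eq_div_iff (mul_ne_zero hD hQ), ← continuant_det hP0 hQ0 hQ1 hPrec hQrec n]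
  field_simp
  linear_combination
    Q (n + 1) * complete_quotient_zero_mul_eq hP0 hP1 hQ0 hQ1 hPrec hQrec hne hrec n

end Continuants

theorem norm_add_eq_left_of_lt {S : Type*} [SeminormedAddGroup S] [IsUltrametricDist S]
    {x y : S} (h : ‖y‖ < ‖x‖) : ‖x + y‖ = ‖x‖ := by
  rw [norm_add_eq_max_of_norm_ne_norm h.ne', max_eq_left h.le]

section Ultrametric

variable {K : Type*} [NormedField K] [IsUltrametricDist K] {a Q : ℕ → K}

theorem strictMono_norm_continuant (hQ0 : Q 0 = 0) (hQ1 : Q 1 = 1)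
    (hQrec : ∀ n, Q (n + 2) = a (n + 1) * Q (n + 1) + Q n)
    (ha : ∀ n, 1 ≤ n → 1 < ‖a n‖) :
    StrictMono fun n => ‖Q n‖ := by
  refine strictMono_nat_of_lt_succ fun n => ?_
  induction n with
  | zero => simp [hQ0, hQ1]
  | succ m ih =>
    have ha' : 1 < ‖a (m + 1)‖ := ha _ m.succ_pos
    have hQpos : 0 < ‖Q (m + 1)‖ := (norm_nonneg _).trans_lt ih
    have hlead : ‖Q (m + 1)‖ < ‖a (m + 1) * Q (m + 1)‖ := by
      rw [norm_mul]
      exact lt_mul_left hQpos ha'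
    rw [hQrec m, norm_add_eq_left_of_lt (ih.trans hlead)]
    exact hlead

theorem norm_complete_denominator {ξs : ℕ → K}
    (hQrec : ∀ n, Q (n + 2) = a (n + 1) * Q (n + 1) + Q n)
    (hne : ∀ k, ξs (k + 1) ≠ 0) (hrec : ∀ k, ξs k = a k + 1 / ξs (k + 1)) {n : ℕ}
    (hQ : ‖Q (n + 1)‖ < ‖Q (n + 2)‖) (hξ : 1 ≤ ‖ξs (n + 2)‖) :
    ‖ξs (n + 1) * Q (n + 1) + Q n‖ = ‖Q (n + 2)‖ := by
  have hsplit : ξs (n + 1) * Q (n + 1) + Q n = Q (n + 2) + Q (n + 1) / ξs (n + 2) := by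
    rw [hrec (n + 1), hQrec n]
    field_simp [hne (n + 1)]
    ring
  have hsmall : ‖Q (n + 1) / ξs (n + 2)‖ < ‖Q (n + 2)‖ := by
    rw [norm_div]
    exact (div_le_self (norm_nonneg _) hξ).trans_lt hQ
  rw [hsplit, norm_add_eq_left_of_lt hsmall]

end Ultrametric

/-- `P (n+1)` is `p_n` and `Q (n+1)` is `q_n` (so `P 0 = p_{-1}`, `Q 0 = q_{-1}`). -/
theorem padic_cf_approximation (p : ℕ) [Fact p.Prime]
    (a : ℕ → ℚ_[p]) (hnorm : ∀ n, 1 ≤ n → (p : ℝ) ≤ ‖a n‖)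
    (P Q : ℕ → ℚ_[p])
    (hP0 : P 0 = 1) (hP1 : P 1 = a 0) (hQ0 : Q 0 = 0) (hQ1 : Q 1 = 1)
    (hPrec : ∀ n, P (n + 2) = a (n + 1) * P (n + 1) + P n)
    (hQrec : ∀ n, Q (n + 2) = a (n + 1) * Q (n + 1) + Q n)
    (ξ : ℚ_[p]) (ξs : ℕ → ℚ_[p])
    (hξ0 : ξs 0 = ξ)
    (hne : ∀ k, ξs (k + 1) ≠ 0)
    (hrec : ∀ k, ξs k = a k + 1 / ξs (k + 1))
    (hξnorm : ∀ k, 1 ≤ k → ‖ξs k‖ = ‖a k‖) :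
    ∀ n, ‖ξ - P (n + 1) / Q (n + 1)‖ = 1 / (‖Q (n + 1)‖ * ‖Q (n + 2)‖) := by
  intro n
  have hp : (1 : ℝ) < p := by exact_mod_cast (Fact.out : p.Prime).one_lt
  have ha : ∀ k, 1 ≤ k → 1 < ‖a k‖ := fun k hk => hp.trans_le (hnorm k hk)
  have hQmono := strictMono_norm_continuant hQ0 hQ1 hQrec ha
  have hQpos : ∀ k, 0 < ‖Q (k + 1)‖ := fun k => (norm_nonneg _).trans_lt (hQmono k.succ_pos)
  have hξ : 1 ≤ ‖ξs (n + 2)‖ := by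
    rw [hξnorm (n + 2) (by omega)]
    exact (ha (n + 2) (by omega)).le
  have hD := norm_complete_denominator hQrec hne hrec (hQmono (n + 1).lt_succ_self) hξ
  have hDne : ξs (n + 1) * Q (n + 1) + Q n ≠ 0 :=
    norm_pos_iff.mp (hD ▸ hQpos (n + 1))
  rw [← hξ0, complete_quotient_zero_sub_convergent hP0 hP1 hQ0 hQ1 hPrec hQrec hne hrec
    (norm_pos_iff.mp (hQpos n)) hDne]
  rw [norm_div, norm_mul, hD, norm_pow, norm_neg, norm_one, one_pow, mul_comm]
end

section
/- Let p be a prime and let (a_n)_{n≥0} be a sequence in ℚ_p with ‖a_n‖_p ≥ p for all n ≥ 1. Let ξ ∈ ℚ_p and let (ξ_k)_{k≥0} be a sequence in ℚ_p with ξ_0 = ξ, ξ_{k+1} ≠ 0 and ξ_k = a_k + 1/ξ_{k+1} for all k ≥ 0, and ‖ξ_k‖_p = ‖a_k‖_p for all k ≥ 1. Then the sequence of convergents p_n/q_n converges to ξ in ℚ_p: lim_{n→∞} p_n/q_n = ξ. -/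
/-!
Because `‖aₙ‖ > 1` for `n ≥ 1`, the ultrametric inequality makes the leading term dominate in
`qₙ₊₁ = aₙ₊₁ qₙ + qₙ₋₁`, so `‖qₙ‖` grows at least like `pⁿ`. The complete quotients give
`ξ = (ξₙ₊₁ pₙ + pₙ₋₁) / (ξₙ₊₁ qₙ + qₙ₋₁)`, and with `pₙ qₙ₋₁ - pₙ₋₁ qₙ = ±1` this yields
`‖pₙ/qₙ - ξ‖ = 1 / (‖qₙ‖² ‖ξₙ₊₁‖) ≤ ‖qₙ‖⁻²`, which tends to `0`.
-/

open Filter Topology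

section Algebra

variable {K : Type*}

theorem convergent_det [CommRing K] {a P Q : ℕ → K} (hP0 : P 0 = 1) (hQ0 : Q 0 = 0) (hQ1 : Q 1 = 1)
    (hPrec : ∀ n, P (n + 2) = a (n + 1) * P (n + 1) + P n)
    (hQrec : ∀ n, Q (n + 2) = a (n + 1) * Q (n + 1) + Q n) :
    ∀ n, P (n + 1) * Q n - P n * Q (n + 1) = (-1) ^ (n + 1)
  | 0 => by simp [hP0, hQ0, hQ1]
  | n + 1 => by
    rw [hPrec, hQrec, pow_succ]
    linear_combination (-1 : K) * convergent_det hP0 hQ0 hQ1 hPrec hQrec n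

theorem mul_complete_denom_eq [Field K] {a P Q ξs : ℕ → K}
    (hP0 : P 0 = 1) (hP1 : P 1 = a 0) (hQ0 : Q 0 = 0) (hQ1 : Q 1 = 1)
    (hPrec : ∀ n, P (n + 2) = a (n + 1) * P (n + 1) + P n)
    (hQrec : ∀ n, Q (n + 2) = a (n + 1) * Q (n + 1) + Q n)
    (hne : ∀ k, ξs (k + 1) ≠ 0) (hrec : ∀ k, ξs k = a k + 1 / ξs (k + 1)) :
    ∀ n, ξs 0 * (ξs (n + 1) * Q (n + 1) + Q n) = ξs (n + 1) * P (n + 1) + P n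
  | 0 => by
    rw [hP0, hP1, hQ0, hQ1, hrec 0]
    field_simp [hne 0]
    ring
  | n + 1 => by
    have hstep : ξs (n + 1) * ξs (n + 2) = a (n + 1) * ξs (n + 2) + 1 := by
      rw [hrec (n + 1)]
      field_simp [hne (n + 1)]
    rw [hPrec, hQrec]
    linear_combination ξs (n + 2) *
        mul_complete_denom_eq hP0 hP1 hQ0 hQ1 hPrec hQrec hne hrec n -
      (ξs 0 * Q (n + 1) - P (n + 1)) * hstep

theorem div_sub_eq_of_mul_eq [Field K] {x p q p' q' t : K} (hq : q ≠ 0) (hd : t * q + q' ≠ 0)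
    (hx : x * (t * q + q') = t * p + p') :
    p / q - x = (p * q' - p' * q) / (q * (t * q + q')) := by
  rw [eq_div_iff (mul_ne_zero hq hd), sub_mul, ← mul_assoc, div_mul_cancel₀ p hq]
  linear_combination (-q) * hx

end Algebra

section Ultrametric

variable {K : Type*} [NormedField K] [IsUltrametricDist K]

theorem norm_mul_add_eq {c x y : K} (hc : 1 ≤ ‖c‖) (h : ‖y‖ < ‖x‖) :
    ‖c * x + y‖ = ‖c‖ * ‖x‖ := by
  have hlt : ‖y‖ < ‖c * x‖ := by
    rw [norm_mul]
    exact h.trans_le (le_mul_of_one_le_left (norm_nonneg _) hc)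
  rw [IsUltrametricDist.norm_add_eq_max_of_norm_ne_norm hlt.ne', max_eq_left hlt.le, norm_mul]

variable {a Q : ℕ → K}

theorem norm_denom_lt_succ (ha : ∀ n, 1 ≤ n → 1 < ‖a n‖) (hQ0 : Q 0 = 0) (hQ1 : Q 1 = 1)
    (hQrec : ∀ n, Q (n + 2) = a (n + 1) * Q (n + 1) + Q n) :
    ∀ n, ‖Q n‖ < ‖Q (n + 1)‖
  | 0 => by simp [hQ0, hQ1]
  | n + 1 => by
    have ih := norm_denom_lt_succ ha hQ0 hQ1 hQrec n
    have ha' := ha (n + 1) le_add_self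
    rw [hQrec, norm_mul_add_eq ha'.le ih]
    exact lt_mul_of_one_lt_left ((norm_nonneg _).trans_lt ih) ha'

theorem pow_le_norm_denom {r : ℝ} (hr : 1 < r) (ha : ∀ n, 1 ≤ n → r ≤ ‖a n‖)
    (hQ0 : Q 0 = 0) (hQ1 : Q 1 = 1) (hQrec : ∀ n, Q (n + 2) = a (n + 1) * Q (n + 1) + Q n) :
    ∀ n, r ^ n ≤ ‖Q (n + 1)‖
  | 0 => by simp [hQ1]
  | n + 1 => by
    have ha' := ha (n + 1) le_add_self
    have hgrow := norm_denom_lt_succ (fun k hk => hr.trans_le (ha k hk)) hQ0 hQ1 hQrec n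
    rw [hQrec, norm_mul_add_eq (hr.le.trans ha') hgrow, pow_succ']
    exact mul_le_mul ha' (pow_le_norm_denom hr ha hQ0 hQ1 hQrec n) (by positivity)
      ((zero_le_one.trans hr.le).trans ha')

theorem tendsto_convergents {r : ℝ} {P ξs : ℕ → K} (hr : 1 < r) (ha : ∀ n, 1 ≤ n → r ≤ ‖a n‖)
    (hP0 : P 0 = 1) (hP1 : P 1 = a 0) (hQ0 : Q 0 = 0) (hQ1 : Q 1 = 1)
    (hPrec : ∀ n, P (n + 2) = a (n + 1) * P (n + 1) + P n)
    (hQrec : ∀ n, Q (n + 2) = a (n + 1) * Q (n + 1) + Q n)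
    (hrec : ∀ k, ξs k = a k + 1 / ξs (k + 1)) (hξs : ∀ k, 1 ≤ k → 1 ≤ ‖ξs k‖) :
    Tendsto (fun n => P (n + 1) / Q (n + 1)) atTop (𝓝 (ξs 0)) := by
  have hξs' (n : ℕ) : 1 ≤ ‖ξs (n + 1)‖ := hξs (n + 1) le_add_self
  have hne (n : ℕ) : ξs (n + 1) ≠ 0 := norm_pos_iff.mp (zero_lt_one.trans_le (hξs' n))
  have hgrow := norm_denom_lt_succ (fun k hk => hr.trans_le (ha k hk)) hQ0 hQ1 hQrec
  have hQpos (n : ℕ) : 0 < ‖Q (n + 1)‖ := (norm_nonneg _).trans_lt (hgrow n)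
  have hden (n : ℕ) : ‖ξs (n + 1) * Q (n + 1) + Q n‖ = ‖ξs (n + 1)‖ * ‖Q (n + 1)‖ :=
    norm_mul_add_eq (hξs' n) (hgrow n)
  have herr (n : ℕ) : ‖P (n + 1) / Q (n + 1) - ξs 0‖ ≤ (‖Q (n + 1)‖ ^ 2)⁻¹ := by
    have hdenpos : 0 < ‖ξs (n + 1) * Q (n + 1) + Q n‖ := by
      rw [hden]; exact mul_pos (zero_lt_one.trans_le (hξs' n)) (hQpos n)
    rw [div_sub_eq_of_mul_eq (norm_pos_iff.mp (hQpos n)) (norm_pos_iff.mp hdenpos)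
        (mul_complete_denom_eq hP0 hP1 hQ0 hQ1 hPrec hQrec hne hrec n),
      convergent_det hP0 hQ0 hQ1 hPrec hQrec, norm_div, norm_pow, norm_neg, norm_one, one_pow,
      norm_mul, hden, one_div, sq]
    exact inv_anti₀ (mul_pos (hQpos n) (hQpos n))
      (mul_le_mul_of_nonneg_left (le_mul_of_one_le_left (hQpos n).le (hξs' n)) (hQpos n).le)
  have hQtop : Tendsto (fun n => ‖Q (n + 1)‖) atTop atTop :=
    tendsto_atTop_mono (pow_le_norm_denom hr ha hQ0 hQ1 hQrec) (tendsto_pow_atTop_atTop_of_one_lt hr)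
  exact tendsto_sub_nhds_zero_iff.mp
    (squeeze_zero_norm herr ((tendsto_pow_atTop two_ne_zero).comp hQtop).inv_tendsto_atTop)

end Ultrametric

theorem padic_cf_convergence_general (p : ℕ) [Fact p.Prime]
    (a : ℕ → ℚ_[p]) (hnorm : ∀ n, 1 ≤ n → (p : ℝ) ≤ ‖a n‖)
    (P Q : ℕ → ℚ_[p])
    (hP0 : P 0 = 1) (hP1 : P 1 = a 0) (hQ0 : Q 0 = 0) (hQ1 : Q 1 = 1)
    (hPrec : ∀ n, P (n + 2) = a (n + 1) * P (n + 1) + P n)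
    (hQrec : ∀ n, Q (n + 2) = a (n + 1) * Q (n + 1) + Q n)
    (ξ : ℚ_[p]) (ξs : ℕ → ℚ_[p])
    (hξ0 : ξs 0 = ξ)
    (hrec : ∀ k, ξs k = a k + 1 / ξs (k + 1))
    (hξnorm : ∀ k, 1 ≤ k → ‖ξs k‖ = ‖a k‖) :
    Filter.Tendsto (fun n => P (n + 1) / Q (n + 1)) Filter.atTop (nhds ξ) := by
  have hp : (1 : ℝ) < p := by exact_mod_cast (Fact.out : p.Prime).one_lt
  have hξs (k : ℕ) (hk : 1 ≤ k) : 1 ≤ ‖ξs k‖ := by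
    rw [hξnorm k hk]
    exact hp.le.trans (hnorm k hk)
  rw [← hξ0]
  exact tendsto_convergents hp hnorm hP0 hP1 hQ0 hQ1 hPrec hQrec hrec hξs

/-- Lemma 1 (iv), second part: the convergents `p_n/q_n` tend to `ξ` in `ℚ_p`.
Here `P (n+1)` is `p_n` and `Q (n+1)` is `q_n` (so `P 0 = p_{-1}`, `Q 0 = q_{-1}`). -/
theorem padic_cf_convergence (p : ℕ) [Fact p.Prime]
    (a : ℕ → ℚ_[p]) (hnorm : ∀ n, 1 ≤ n → (p : ℝ) ≤ ‖a n‖)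
    (P Q : ℕ → ℚ_[p])
    (hP0 : P 0 = 1) (hP1 : P 1 = a 0) (hQ0 : Q 0 = 0) (hQ1 : Q 1 = 1)
    (hPrec : ∀ n, P (n + 2) = a (n + 1) * P (n + 1) + P n)
    (hQrec : ∀ n, Q (n + 2) = a (n + 1) * Q (n + 1) + Q n)
    (ξ : ℚ_[p]) (ξs : ℕ → ℚ_[p])
    (hξ0 : ξs 0 = ξ)
    (hne : ∀ k, ξs (k + 1) ≠ 0)
    (hrec : ∀ k, ξs k = a k + 1 / ξs (k + 1))
    (hξnorm : ∀ k, 1 ≤ k → ‖ξs k‖ = ‖a k‖) :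
    Filter.Tendsto (fun n => P (n + 1) / Q (n + 1)) Filter.atTop (nhds ξ) :=
  padic_cf_convergence_general p a hnorm P Q hP0 hP1 hQ0 hQ1 hPrec hQrec ξ ξs hξ0 hrec hξnorm
end

section
/- Let p be a prime and let ξ ∈ ℚ_p be irrational (ξ ∉ ℚ). Then there exists a sequence (a_n)_{n≥0} of rational numbers whose denominators are powers of p (a_n ∈ ℤ[1/p]) such that 0 ≤ a_0 < p, 0 < a_n < p and ‖a_n‖_p ≥ p for all n ≥ 1, and such that the convergents p_n/q_n of the continued fraction with partial quotients (a_n) converge to ξ in ℚ_p. -/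
/-!
The expansion is produced by the usual continued fraction algorithm with a p-adic "floor":
every `ξ ∈ ℚ_p` lies within `1/p` of some `s(ξ) ∈ ℤ[1/p] ∩ [0, p)`, namely `z / p^m` where `z`
truncates `p^m ξ ∈ ℤ_p` modulo `p^(m+1)`. Put `ξ₀ = ξ`, `aₙ = s(ξₙ)`, `ξₙ₊₁ = (ξₙ - aₙ)⁻¹`;
irrationality of `ξ` keeps every `ξₙ` irrational, so the algorithm never stops. Since
`‖ξₙ - aₙ‖ ≤ 1/p`, we get `‖ξₙ₊₁‖ ≥ p` and, by the ultrametric inequality, `‖aₙ₊₁‖ = ‖ξₙ₊₁‖ ≥ p`.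
From the identity `(ξ qₙ - pₙ) ξₙ₊₁ = pₙ₋₁ - ξ qₙ₋₁` we get `‖ξ qₙ - pₙ‖ ≤ p^(-n)`, while the
norms `‖qₙ‖ ≥ 1` increase, so `‖ξ - pₙ/qₙ‖ ≤ p^(-n)`.
-/

open Filter Topology

section Convergents

variable {K : Type*} {a X P Q : ℕ → K}

theorem cf_remainder_mul_completeQuotient [CommRing K]
    (hX : ∀ n, X (n + 1) * (X n - a n) = 1)
    (hP0 : P 0 = 1) (hP1 : P 1 = a 0) (hQ0 : Q 0 = 0) (hQ1 : Q 1 = 1)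
    (hP : ∀ n, P (n + 2) = a (n + 1) * P (n + 1) + P n)
    (hQ : ∀ n, Q (n + 2) = a (n + 1) * Q (n + 1) + Q n) (n : ℕ) :
    (X 0 * Q (n + 1) - P (n + 1)) * X (n + 1) = P n - X 0 * Q n := by
  induction n with
  | zero =>
    rw [hP0, hP1, hQ0, hQ1]
    linear_combination hX 0
  | succ n ih =>
    rw [hP n, hQ n]
    linear_combination X (n + 2) * ih - (X 0 * Q (n + 1) - P (n + 1)) * hX (n + 1)

theorem norm_cf_remainder_le [NormedField K] {r : ℝ} (hr : 0 < r)
    (hXr : ∀ n, r ≤ ‖X (n + 1)‖)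
    (hrem : ∀ n, (X 0 * Q (n + 1) - P (n + 1)) * X (n + 1) = P n - X 0 * Q n)
    (hP0 : P 0 = 1) (hQ0 : Q 0 = 0) (n : ℕ) :
    ‖X 0 * Q n - P n‖ ≤ r⁻¹ ^ n := by
  induction n with
  | zero => simp [hP0, hQ0]
  | succ n ih =>
    have hstep : r * ‖X 0 * Q (n + 1) - P (n + 1)‖ ≤ ‖X 0 * Q n - P n‖ :=
      calc r * ‖X 0 * Q (n + 1) - P (n + 1)‖
          ≤ ‖X (n + 1)‖ * ‖X 0 * Q (n + 1) - P (n + 1)‖ := by gcongr; exact hXr n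
        _ = ‖X 0 * Q n - P n‖ := by rw [mul_comm, ← norm_mul, hrem n, norm_sub_rev]
    calc ‖X 0 * Q (n + 1) - P (n + 1)‖ = r⁻¹ * (r * ‖X 0 * Q (n + 1) - P (n + 1)‖) := by
          field_simp
      _ ≤ r⁻¹ * r⁻¹ ^ n := by gcongr; exact hstep.trans ih
      _ = r⁻¹ ^ (n + 1) := (pow_succ' _ _).symm

theorem strictMono_norm_cf_denom [NormedField K] [IsUltrametricDist K]
    (ha : ∀ n, 1 < ‖a (n + 1)‖) (hQ0 : Q 0 = 0) (hQ1 : Q 1 = 1)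
    (hQ : ∀ n, Q (n + 2) = a (n + 1) * Q (n + 1) + Q n) :
    StrictMono (fun n => ‖Q n‖) := by
  refine strictMono_nat_of_lt_succ fun n => ?_
  induction n with
  | zero => simp [hQ0, hQ1]
  | succ n ih =>
    have hlt : ‖Q (n + 1)‖ < ‖a (n + 1) * Q (n + 1)‖ := by
      rw [norm_mul]
      exact lt_mul_left ((norm_nonneg _).trans_lt ih) (ha n)
    rw [hQ n, IsUltrametricDist.norm_add_eq_max_of_norm_ne_norm (ih.trans hlt).ne',
      max_eq_left (ih.trans hlt).le]
    exact hlt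

theorem tendsto_cf_convergents [NormedField K] [IsUltrametricDist K] {r : ℝ} (hr : 1 < r)
    (hXr : ∀ n, r ≤ ‖X (n + 1)‖) (ha : ∀ n, 1 < ‖a (n + 1)‖)
    (hX : ∀ n, X (n + 1) * (X n - a n) = 1)
    (hP0 : P 0 = 1) (hP1 : P 1 = a 0) (hQ0 : Q 0 = 0) (hQ1 : Q 1 = 1)
    (hP : ∀ n, P (n + 2) = a (n + 1) * P (n + 1) + P n)
    (hQ : ∀ n, Q (n + 2) = a (n + 1) * Q (n + 1) + Q n) :
    Tendsto (fun n => P (n + 1) / Q (n + 1)) atTop (𝓝 (X 0)) := by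
  have hrem := cf_remainder_mul_completeQuotient hX hP0 hP1 hQ0 hQ1 hP hQ
  have hQ_ge (n : ℕ) : 1 ≤ ‖Q (n + 1)‖ := by
    simpa [hQ1] using (strictMono_norm_cf_denom ha hQ0 hQ1 hQ).monotone (Nat.le_add_left 1 n)
  have hbound (n : ℕ) : ‖P (n + 1) / Q (n + 1) - X 0‖ ≤ r⁻¹ ^ (n + 1) := by
    have hQne : Q (n + 1) ≠ 0 := norm_pos_iff.mp (zero_lt_one.trans_le (hQ_ge n))
    calc ‖P (n + 1) / Q (n + 1) - X 0‖ = ‖X 0 * Q (n + 1) - P (n + 1)‖ / ‖Q (n + 1)‖ := by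
          rw [← norm_div, ← norm_neg]
          congr 1
          field_simp
          ring
      _ ≤ ‖X 0 * Q (n + 1) - P (n + 1)‖ := div_le_self (norm_nonneg _) (hQ_ge n)
      _ ≤ r⁻¹ ^ (n + 1) := norm_cf_remainder_le (by positivity) hXr hrem hP0 hQ0 (n + 1)
  rw [tendsto_iff_norm_sub_tendsto_zero]
  refine squeeze_zero (fun n => norm_nonneg _) hbound ?_
  exact (tendsto_pow_atTop_nhds_zero_of_lt_one (by positivity) (inv_lt_one_of_one_lt₀ hr)).comp
    (tendsto_add_atTop_nat 1)

end Convergents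

theorem ratCast_ne_inv_sub {K : Type*} [Field K] [CharZero K] {x : K}
    (hx : ∀ r : ℚ, (r : K) ≠ x) (a r : ℚ) : (r : K) ≠ (x - a)⁻¹ := by
  intro hr
  apply hx (a + r⁻¹)
  push_cast
  rw [hr, inv_inv]
  ring

namespace Padic

variable {p : ℕ} [Fact p.Prime]

theorem exists_rat_near (ξ : ℚ_[p]) :
    ∃ a : ℚ, (∃ m : ℕ, ∃ z : ℤ, (p : ℚ) ^ m * a = z) ∧ 0 ≤ a ∧ a < p ∧
      ‖ξ - a‖ ≤ (p : ℝ)⁻¹ := by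
  have hp : (1 : ℝ) < p := by exact_mod_cast (Fact.out : p.Prime).one_lt
  have hp0 : (0 : ℚ) < p := by exact_mod_cast (Fact.out : p.Prime).pos
  obtain ⟨m, hm⟩ := pow_unbounded_of_one_lt ‖ξ‖ hp
  obtain ⟨y, hy⟩ : ∃ y : ℤ_[p], (y : ℚ_[p]) = p ^ m * ξ := by
    refine ⟨⟨_, ?_⟩, rfl⟩
    rw [norm_mul, norm_p_pow, zpow_neg, zpow_natCast, inv_mul_le_one₀ (by positivity)]
    exact hm.le
  have hpm : (p : ℚ_[p]) ^ m ≠ 0 := pow_ne_zero _ (by exact_mod_cast (Fact.out : p.Prime).ne_zero)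
  set z : ℕ := y.appr (m + 1)
  have hyz : ‖(y : ℚ_[p]) - z‖ ≤ (p : ℝ) ^ (-(m + 1 : ℕ) : ℤ) := by
    simpa [PadicInt.norm_def] using
      (PadicInt.norm_le_pow_iff_mem_span_pow _ _).2 (PadicInt.appr_spec (m + 1) y)
  refine ⟨z / (p : ℚ) ^ m, ⟨m, z, by field_simp; norm_cast⟩, by positivity, ?_, ?_⟩
  · rw [div_lt_iff₀ (by positivity), ← pow_succ']
    exact_mod_cast y.appr_lt (m + 1)
  · have hξ : ξ - ((z / (p : ℚ) ^ m : ℚ) : ℚ_[p]) = ((y : ℚ_[p]) - z) / (p : ℚ_[p]) ^ m := by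
      rw [hy]
      push_cast
      field_simp
    rw [hξ, norm_div, norm_p_pow, div_le_iff₀ (by positivity)]
    refine hyz.trans_eq ?_
    rw [Nat.cast_succ, neg_add, zpow_add₀ (by positivity), zpow_neg_one, mul_comm]

noncomputable def cfFloor (ξ : ℚ_[p]) : ℚ := (exists_rat_near ξ).choose

theorem exists_pow_mul_cfFloor_eq_intCast (ξ : ℚ_[p]) : ∃ m : ℕ, ∃ z : ℤ, (p : ℚ) ^ m * cfFloor ξ = z :=
  (exists_rat_near ξ).choose_spec.1

theorem cfFloor_nonneg (ξ : ℚ_[p]) : 0 ≤ cfFloor ξ := (exists_rat_near ξ).choose_spec.2.1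

theorem cfFloor_lt (ξ : ℚ_[p]) : cfFloor ξ < p := (exists_rat_near ξ).choose_spec.2.2.1

theorem norm_sub_cfFloor_le (ξ : ℚ_[p]) : ‖ξ - cfFloor ξ‖ ≤ (p : ℝ)⁻¹ :=
  (exists_rat_near ξ).choose_spec.2.2.2

noncomputable def completeQuotient (ξ : ℚ_[p]) : ℕ → ℚ_[p]
  | 0 => ξ
  | n + 1 => (completeQuotient ξ n - cfFloor (completeQuotient ξ n))⁻¹

noncomputable def partialQuotient (ξ : ℚ_[p]) (n : ℕ) : ℚ := cfFloor (completeQuotient ξ n)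

section Irrational

variable {ξ : ℚ_[p]} (hξ : ∀ r : ℚ, (r : ℚ_[p]) ≠ ξ)
include hξ

theorem ratCast_ne_completeQuotient (n : ℕ) (r : ℚ) : (r : ℚ_[p]) ≠ completeQuotient ξ n := by
  induction n generalizing r with
  | zero => exact hξ r
  | succ n ih => exact ratCast_ne_inv_sub ih _ r

theorem completeQuotient_sub_partialQuotient_ne_zero (n : ℕ) :
    completeQuotient ξ n - partialQuotient ξ n ≠ 0 :=
  sub_ne_zero.mpr (ratCast_ne_completeQuotient hξ n _).symm

theorem completeQuotient_succ_mul_sub (n : ℕ) :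
    completeQuotient ξ (n + 1) * (completeQuotient ξ n - partialQuotient ξ n) = 1 :=
  inv_mul_cancel₀ (completeQuotient_sub_partialQuotient_ne_zero hξ n)

theorem le_norm_completeQuotient_succ (n : ℕ) : (p : ℝ) ≤ ‖completeQuotient ξ (n + 1)‖ := by
  change (p : ℝ) ≤ ‖(completeQuotient ξ n - partialQuotient ξ n)⁻¹‖
  rw [norm_inv,
    le_inv_comm₀ (by exact_mod_cast (Fact.out : p.Prime).pos)
      (norm_pos_iff.mpr (completeQuotient_sub_partialQuotient_ne_zero hξ n))]
  exact norm_sub_cfFloor_le _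

theorem norm_partialQuotient_succ (n : ℕ) :
    ‖(partialQuotient ξ (n + 1) : ℚ_[p])‖ = ‖completeQuotient ξ (n + 1)‖ := by
  have hp : (1 : ℝ) < p := by exact_mod_cast (Fact.out : p.Prime).one_lt
  refine (norm_eq_of_norm_sub_lt_left ?_).symm
  calc _ ≤ (p : ℝ)⁻¹ := norm_sub_cfFloor_le _
    _ < p := (inv_lt_one_of_one_lt₀ hp).trans hp
    _ ≤ _ := le_norm_completeQuotient_succ hξ n

theorem le_norm_partialQuotient_succ (n : ℕ) : (p : ℝ) ≤ ‖(partialQuotient ξ (n + 1) : ℚ_[p])‖ :=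
  (norm_partialQuotient_succ hξ n).symm ▸ le_norm_completeQuotient_succ hξ n

theorem partialQuotient_succ_pos (n : ℕ) : 0 < partialQuotient ξ (n + 1) := by
  have hne : partialQuotient ξ (n + 1) ≠ 0 := by
    intro h
    have := le_norm_partialQuotient_succ hξ n
    rw [h, Rat.cast_zero, norm_zero, Nat.cast_nonpos] at this
    exact (Fact.out : p.Prime).ne_zero this
  exact (cfFloor_nonneg _).lt_of_ne hne.symm

end Irrational

end Padic

open Padic

/-- Every irrational `ξ ∈ ℚ_p` admits a p-adic continued fraction expansion with partial
quotients `a_n ∈ ℤ[1/p]`, `0 ≤ a_0 < p`, `0 < a_n < p` and `‖a_n‖_p ≥ p` for `n ≥ 1`,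
whose convergents `p_n/q_n` converge to `ξ`.
Here `P (n+1)` is `p_n` and `Q (n+1)` is `q_n` (so `P 0 = p_{-1}`, `Q 0 = q_{-1}`). -/
theorem padic_cf_expansion_exists (p : ℕ) [Fact p.Prime] (ξ : ℚ_[p])
    (hirr : ∀ r : ℚ, (r : ℚ_[p]) ≠ ξ) :
    ∃ a : ℕ → ℚ,
      (∀ n, ∃ m : ℕ, ∃ z : ℤ, (p : ℚ) ^ m * a n = z) ∧
      (0 ≤ a 0 ∧ a 0 < p) ∧
      (∀ n, 1 ≤ n → 0 < a n ∧ a n < p ∧ (p : ℝ) ≤ ‖((a n : ℚ) : ℚ_[p])‖) ∧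
      ∀ P Q : ℕ → ℚ_[p],
        P 0 = 1 → P 1 = ((a 0 : ℚ) : ℚ_[p]) → Q 0 = 0 → Q 1 = 1 →
        (∀ n, P (n + 2) = ((a (n + 1) : ℚ) : ℚ_[p]) * P (n + 1) + P n) →
        (∀ n, Q (n + 2) = ((a (n + 1) : ℚ) : ℚ_[p]) * Q (n + 1) + Q n) →
        Filter.Tendsto (fun n => P (n + 1) / Q (n + 1)) Filter.atTop (nhds ξ) := by
  have hp : (1 : ℝ) < p := by exact_mod_cast (Fact.out : p.Prime).one_lt
  refine ⟨partialQuotient ξ, fun n => exists_pow_mul_cfFloor_eq_intCast _,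
    ⟨cfFloor_nonneg _, cfFloor_lt _⟩, ?_, ?_⟩
  · rintro (_ | n) hn
    · omega
    exact ⟨partialQuotient_succ_pos hirr n, cfFloor_lt _, le_norm_partialQuotient_succ hirr n⟩
  · intro P Q hP0 hP1 hQ0 hQ1 hP hQ
    exact tendsto_cf_convergents hp (le_norm_completeQuotient_succ hirr)
      (fun n => hp.trans_le (le_norm_partialQuotient_succ hirr n))
      (completeQuotient_succ_mul_sub hirr) hP0 hP1 hQ0 hQ1 hP hQ
end

section
/- Let (a_n)_{n≥0} be a sequence in ℚ_p with ‖a_n‖_p ≥ p for all n ≥ 1, and let (q_n) be the convergent denominators of the continued fraction with partial quotients (a_n). Then ‖q_n‖_p ≥ p^n for all n ≥ 0; in particular ‖q_n‖_p → ∞ and 1/(‖q_n‖_p ‖q_{n+1}‖_p) → 0 as n → ∞. -/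
/-! In an ultrametric field, if `‖Q n‖ < ‖Q (n + 1)‖` and `‖a (n + 1)‖ > 1`, the term
`a (n + 1) * Q (n + 1)` strictly dominates `Q n`, so all triangles being isosceles gives
`‖Q (n + 2)‖ = ‖a (n + 1)‖ * ‖Q (n + 1)‖ > ‖Q (n + 1)‖`. Inductively, `‖Q (n + 1)‖` is the
product of the norms of the partial quotients `a 1, …, a n`, which is at least `p ^ n`. -/

open Filter Finset

/-- `Q (n + 1)` is the convergent denominator `q_n`, shifted so that `Q 0 = q_{-1}`. -/
structure IsConvergentDenom {K : Type*} [Semiring K] (a Q : ℕ → K) : Prop where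
  zero : Q 0 = 0
  one : Q 1 = 1
  succ_succ : ∀ n, Q (n + 2) = a (n + 1) * Q (n + 1) + Q n

namespace IsConvergentDenom

variable {K : Type*} [NormedDivisionRing K] [IsUltrametricDist K] {a Q : ℕ → K}

lemma norm_succ_succ_eq_of_norm_lt (hQ : IsConvergentDenom a Q) {n : ℕ}
    (ha : 1 ≤ ‖a (n + 1)‖) (hlt : ‖Q n‖ < ‖Q (n + 1)‖) :
    ‖Q (n + 2)‖ = ‖a (n + 1)‖ * ‖Q (n + 1)‖ := by
  have hdom : ‖Q n‖ < ‖a (n + 1) * Q (n + 1)‖ := by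
    rw [norm_mul]
    exact hlt.trans_le (le_mul_of_one_le_left (norm_nonneg _) ha)
  rw [hQ.succ_succ, IsUltrametricDist.norm_add_eq_max_of_norm_ne_norm hdom.ne',
    max_eq_left hdom.le, norm_mul]

lemma norm_lt_norm_succ (hQ : IsConvergentDenom a Q) (ha : ∀ n, 1 < ‖a (n + 1)‖) (n : ℕ) :
    ‖Q n‖ < ‖Q (n + 1)‖ := by
  induction n with
  | zero => simp [hQ.zero, hQ.one]
  | succ n ih =>
    rw [hQ.norm_succ_succ_eq_of_norm_lt (ha n).le ih]
    exact lt_mul_of_one_lt_left ((norm_nonneg _).trans_lt ih) (ha n)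

lemma norm_succ_eq_prod (hQ : IsConvergentDenom a Q) (ha : ∀ n, 1 < ‖a (n + 1)‖) (n : ℕ) :
    ‖Q (n + 1)‖ = ∏ i ∈ range n, ‖a (i + 1)‖ := by
  induction n with
  | zero => simp [hQ.one]
  | succ n ih =>
    rw [hQ.norm_succ_succ_eq_of_norm_lt (ha n).le (hQ.norm_lt_norm_succ ha n), ih,
      prod_range_succ, mul_comm]

lemma pow_le_norm_succ (hQ : IsConvergentDenom a Q) {c : ℝ} (hc : 1 < c)
    (ha : ∀ n, c ≤ ‖a (n + 1)‖) (n : ℕ) : c ^ n ≤ ‖Q (n + 1)‖ := by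
  calc c ^ n = ∏ _i ∈ range n, c := by rw [prod_const, card_range]
    _ ≤ ∏ i ∈ range n, ‖a (i + 1)‖ := prod_le_prod (fun _ _ => by positivity) fun i _ => ha i
    _ = ‖Q (n + 1)‖ := (hQ.norm_succ_eq_prod (fun n => hc.trans_le (ha n)) n).symm

end IsConvergentDenom

lemma tendsto_one_div_mul_succ_of_tendsto_atTop {f : ℕ → ℝ} (hf : Tendsto f atTop atTop) :
    Tendsto (fun n => 1 / (f n * f (n + 1))) atTop (nhds 0) := by
  simpa only [one_div, Pi.inv_def, Function.comp_apply] using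
    (hf.atTop_mul_atTop₀ (hf.comp (tendsto_add_atTop_nat 1))).inv_tendsto_atTop

/-- If `‖a_n‖_p ≥ p` for all `n ≥ 1`, then the convergent denominators satisfy
`‖q_n‖_p ≥ p^n`, hence `‖q_n‖_p → ∞` and `1/(‖q_n‖_p ‖q_{n+1}‖_p) → 0`.
Here `Q (n+1)` is `q_n` (so `Q 0 = q_{-1} = 0`, `Q 1 = q_0 = 1`). -/
theorem padic_cf_denominator_growth (p : ℕ) [Fact p.Prime]
    (a : ℕ → ℚ_[p]) (hnorm : ∀ n, 1 ≤ n → (p : ℝ) ≤ ‖a n‖)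
    (Q : ℕ → ℚ_[p])
    (hQ0 : Q 0 = 0) (hQ1 : Q 1 = 1)
    (hQrec : ∀ n, Q (n + 2) = a (n + 1) * Q (n + 1) + Q n) :
    (∀ n, (p : ℝ) ^ n ≤ ‖Q (n + 1)‖) ∧
    Filter.Tendsto (fun n => ‖Q (n + 1)‖) Filter.atTop Filter.atTop ∧
    Filter.Tendsto (fun n => 1 / (‖Q (n + 1)‖ * ‖Q (n + 2)‖)) Filter.atTop (nhds 0) := by
  have hp : (1 : ℝ) < p := by exact_mod_cast (Fact.out : p.Prime).one_lt
  have hQ : IsConvergentDenom a Q := ⟨hQ0, hQ1, hQrec⟩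
  have hgrowth : ∀ n, (p : ℝ) ^ n ≤ ‖Q (n + 1)‖ :=
    hQ.pow_le_norm_succ hp fun n => hnorm (n + 1) n.succ_pos
  have hunbounded : Tendsto (fun n => ‖Q (n + 1)‖) atTop atTop :=
    tendsto_atTop_mono hgrowth (tendsto_pow_atTop_atTop_of_one_lt hp)
  exact ⟨hgrowth, hunbounded, tendsto_one_div_mul_succ_of_tendsto_atTop hunbounded⟩
end
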